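/- The set of integral binary cubic forms with zero discriminant of 'type II' decomposes as the disjoint union L₀(II) = ⊔_{m ≥ 1} ⊔_{0 ≤ n < m} ⊔_{γ ∈ SL₂(ℤ)} γ·(0,0,m,n); that is, every nonzero integral binary cubic form of discriminant zero that is not SL₂(ℤ)-equivalent to a form (0,0,0,k) is SL₂(ℤ)-equivalent to exactly one form (0,0,m,n) with m ≥ 1 and 0 ≤ n < m, and its stabilizer in SL₂(ℤ) is trivial for such forms. -/

import Mathlib

noncomputable section

/-- Evaluation of the integral binary cubic form with coefficient vector `v = (a,b,c,d)`. -/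
def formEvalZ (v : Fin 4 → ℤ) (x y : ℤ) : ℤ :=
  v 0 * x ^ 3 + v 1 * x ^ 2 * y + v 2 * x * y ^ 2 + v 3 * y ^ 3

/-- `cubicActsZ γ v w` states that `w = γ · v` for the twisted action of `SL₂(ℤ)`. -/
def cubicActsZ (γ : Matrix (Fin 2) (Fin 2) ℤ) (v w : Fin 4 → ℤ) : Prop :=
  ∀ x y : ℤ, formEvalZ w x y =
    formEvalZ v (x * γ 0 0 + y * γ 1 0) (x * γ 0 1 + y * γ 1 1)

/-- Discriminant of an integral binary cubic form. -/
def cubicDiscZ (v : Fin 4 → ℤ) : ℤ :=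
  18 * v 0 * v 1 * v 2 * v 3 + v 1 ^ 2 * v 2 ^ 2 - 4 * v 0 * v 2 ^ 3
    - 4 * v 1 ^ 3 * v 3 - 27 * v 0 ^ 2 * v 3 ^ 2

/-!
A form of discriminant zero has a double root over `ℚ`, where both partial derivatives vanish:
the root `(Q, -2P)` of the Hessian `P x² + Q xy + R y²` when `P ≠ 0` (its discriminant is `-3`
times that of the form), and `(b, -3a)` or `(1, 0)` when `P = 0`. Scaling it to a primitive
vector `(p, q)` and completing this to a matrix of `SL₂(ℤ)` moves the double root to `(1, 0)`,
so the form becomes `y² (C x + D y)`. `C = 0` is the excluded case `(0, 0, 0, D)`; otherwise `-1`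
and the shears `x ↦ x + t y` reduce to `C > 0`, `0 ≤ D < C`. Conversely, if `γ` carries
`y² (m x + n y)` to `y² (m' x + n' y)` then `γ` fixes the double root, so it is lower triangular
with diagonal `±1`, and the inequalities `1 ≤ m`, `0 ≤ n, n' < m` force `γ = 1`.
-/

theorem formEvalZ_injective : Function.Injective formEvalZ := by
  intro v w h
  have h10 := congrFun₂ h 1 0
  have h01 := congrFun₂ h 0 1
  have h11 := congrFun₂ h 1 1
  have h1m := congrFun₂ h 1 (-1)
  simp only [formEvalZ] at h10 h01 h11 h1m
  ring_nf at h10 h01 h11 h1m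
  funext i
  fin_cases i <;> simp <;> linarith

@[simp]
theorem formEvalZ_zero_zero (m n x y : ℤ) :
    formEvalZ ![0, 0, m, n] x y = y ^ 2 * (m * x + n * y) := by
  simp [formEvalZ]
  ring

theorem cubicActsZ.mul {γ δ : Matrix (Fin 2) (Fin 2) ℤ} {u v w : Fin 4 → ℤ}
    (hγ : cubicActsZ γ u v) (hδ : cubicActsZ δ v w) : cubicActsZ (δ * γ) u w := by
  intro x y
  rw [hδ, hγ]
  congr 1 <;> simp [Matrix.mul_apply, Fin.sum_univ_two] <;> ring

theorem cubicActsZ.adjugate {γ : Matrix (Fin 2) (Fin 2) ℤ} {u w : Fin 4 → ℤ}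
    (hdet : γ.det = 1) (h : cubicActsZ γ u w) : cubicActsZ γ.adjugate w u := by
  rw [Matrix.det_fin_two] at hdet
  intro x y
  rw [h, Matrix.adjugate_fin_two]
  congr 1 <;> simp
  · linear_combination -x * hdet
  · linear_combination -y * hdet

theorem cubicActsZ_one_iff {u w : Fin 4 → ℤ} : cubicActsZ 1 u w ↔ w = u := by
  refine ⟨fun h => formEvalZ_injective (funext₂ fun x y => by simpa using h x y), ?_⟩
  rintro rfl x y
  simp

def CubicEquiv (v w : Fin 4 → ℤ) : Prop :=
  ∃ γ : Matrix (Fin 2) (Fin 2) ℤ, γ.det = 1 ∧ cubicActsZ γ v w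

namespace CubicEquiv

variable {u v w : Fin 4 → ℤ}

theorem symm (h : CubicEquiv v w) : CubicEquiv w v := by
  obtain ⟨γ, hdet, hγ⟩ := h
  refine ⟨γ.adjugate, ?_, hγ.adjugate hdet⟩
  simp [Matrix.det_adjugate, hdet]

theorem trans (huv : CubicEquiv u v) (hvw : CubicEquiv v w) : CubicEquiv u w := by
  obtain ⟨γ, hγ, huv⟩ := huv
  obtain ⟨δ, hδ, hvw⟩ := hvw
  exact ⟨δ * γ, by simp [hγ, hδ], huv.mul hvw⟩

end CubicEquiv

/-- Both partial derivatives of the form `v` vanish at `(p, q)`. -/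
def IsDoubleRoot (v : Fin 4 → ℤ) (p q : ℤ) : Prop :=
  3 * v 0 * p ^ 2 + 2 * v 1 * p * q + v 2 * q ^ 2 = 0 ∧
    v 1 * p ^ 2 + 2 * v 2 * p * q + 3 * v 3 * q ^ 2 = 0

theorem IsDoubleRoot.of_mul_right {v : Fin 4 → ℤ} {p q g : ℤ} (hg : g ≠ 0)
    (h : IsDoubleRoot v (p * g) (q * g)) : IsDoubleRoot v p q := by
  obtain ⟨hx, hy⟩ := h
  have hg2 : g ^ 2 ≠ 0 := pow_ne_zero 2 hg
  constructor
  · exact (mul_eq_zero.mp (by linear_combination hx)).resolve_left hg2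
  · exact (mul_eq_zero.mp (by linear_combination hy)).resolve_left hg2

theorem IsDoubleRoot.exists_primitive {v : Fin 4 → ℤ} {p q : ℤ} (h : IsDoubleRoot v p q)
    (hpq : p ≠ 0 ∨ q ≠ 0) :
    ∃ p' q' r s : ℤ, p' * s - q' * r = 1 ∧ IsDoubleRoot v p' q' := by
  obtain ⟨g, p', q', hg, hgcd, rfl, rfl⟩ := Int.exists_gcd_one' (Int.gcd_pos_iff.mpr hpq)
  obtain ⟨a, b, hab⟩ := Int.isCoprime_iff_gcd_eq_one.mpr hgcd
  exact ⟨p', q', -b, a, by linear_combination hab, h.of_mul_right (by omega)⟩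

theorem exists_isDoubleRoot_of_cubicDiscZ_eq_zero {v : Fin 4 → ℤ} (hdisc : cubicDiscZ v = 0) :
    ∃ p q : ℤ, (p ≠ 0 ∨ q ≠ 0) ∧ IsDoubleRoot v p q := by
  unfold cubicDiscZ at hdisc
  by_cases hP : v 1 ^ 2 - 3 * v 0 * v 2 = 0
  · have hQ : v 1 * v 2 - 9 * v 0 * v 3 = 0 := by
      refine pow_eq_zero_iff (n := 2) two_ne_zero |>.mp ?_
      linear_combination (-3) * hdisc + 4 * (v 2 ^ 2 - 3 * v 1 * v 3) * hP
    by_cases ha : v 0 = 0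
    · have hb : v 1 = 0 :=
        pow_eq_zero_iff two_ne_zero |>.mp (by linear_combination hP + 3 * v 2 * ha)
      exact ⟨1, 0, by simp, by linear_combination 3 * ha, by linear_combination hb⟩
    · exact ⟨v 1, -3 * v 0, by omega, by linear_combination -3 * v 0 * hP,
        by linear_combination v 1 * hP - 3 * v 0 * hQ⟩
  · exact ⟨v 1 * v 2 - 9 * v 0 * v 3, -2 * (v 1 ^ 2 - 3 * v 0 * v 2), by omega,
      by linear_combination -9 * v 0 * hdisc, by linear_combination -3 * v 1 * hdisc⟩

theorem IsDoubleRoot.exists_cubicEquiv_zero_zero {v : Fin 4 → ℤ} {p q r s : ℤ}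
    (hdet : p * s - q * r = 1) (h : IsDoubleRoot v p q) :
    ∃ C D : ℤ, CubicEquiv v ![0, 0, C, D] := by
  obtain ⟨hx, hy⟩ := h
  have hroot : formEvalZ v p q = 0 := by
    have h3 : 3 * formEvalZ v p q = 0 := by
      unfold formEvalZ
      linear_combination p * hx + q * hy
    omega
  refine ⟨3 * v 0 * p * r ^ 2 + v 1 * (q * r ^ 2 + 2 * p * r * s)
      + v 2 * (p * s ^ 2 + 2 * q * r * s) + 3 * v 3 * q * s ^ 2, formEvalZ v r s,
    !![p, q; r, s], by simp [Matrix.det_fin_two, hdet], fun x y => ?_⟩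
  rw [formEvalZ_zero_zero]
  simp only [formEvalZ, Matrix.of_apply, Matrix.cons_val', Matrix.cons_val_zero,
    Matrix.cons_val_one, Matrix.empty_val', Matrix.cons_val_fin_one] at hroot ⊢
  linear_combination -x ^ 3 * hroot - x ^ 2 * y * (r * hx + s * hy)

theorem cubicEquiv_zero_zero_neg (m n : ℤ) : CubicEquiv ![0, 0, m, n] ![0, 0, -m, -n] := by
  exact ⟨-1, by simp [Matrix.det_fin_two], fun x y => by simp⟩

theorem cubicEquiv_zero_zero_add_mul (m n t : ℤ) :
    CubicEquiv ![0, 0, m, n] ![0, 0, m, n + m * t] := by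
  refine ⟨!![1, 0; t, 1], by simp [Matrix.det_fin_two], fun x y => ?_⟩
  simp only [formEvalZ_zero_zero, Matrix.of_apply, Matrix.cons_val', Matrix.cons_val_zero,
    Matrix.cons_val_one, Matrix.empty_val', Matrix.cons_val_fin_one]
  ring

theorem exists_reduced_cubicEquiv {C : ℤ} (hC : C ≠ 0) (D : ℤ) :
    ∃ m n : ℤ, 1 ≤ m ∧ 0 ≤ n ∧ n < m ∧ CubicEquiv ![0, 0, m, n] ![0, 0, C, D] := by
  have of_pos : ∀ {C : ℤ} (D : ℤ), 0 < C →
      ∃ m n : ℤ, 1 ≤ m ∧ 0 ≤ n ∧ n < m ∧ CubicEquiv ![0, 0, m, n] ![0, 0, C, D] := by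
    intro C D hC
    refine ⟨C, D % C, hC, Int.emod_nonneg _ hC.ne', Int.emod_lt_of_pos _ hC, ?_⟩
    have h := cubicEquiv_zero_zero_add_mul C (D % C) (D / C)
    rwa [Int.emod_add_mul_ediv] at h
  rcases hC.lt_or_gt with hneg | hpos
  · obtain ⟨m, n, hm, hn, hnm, h⟩ := of_pos (-D) (neg_pos.mpr hneg)
    refine ⟨m, n, hm, hn, hnm, h.trans ?_⟩
    simpa using cubicEquiv_zero_zero_neg (-C) (-D)
  · exact of_pos D hpos

theorem eq_one_of_cubicActsZ_reduced {m n m' n' : ℤ} (hm : 1 ≤ m) (hn : 0 ≤ n) (hnm : n < m)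
    (hn' : 0 ≤ n') (hnm' : n' < m') {γ : Matrix (Fin 2) (Fin 2) ℤ}
    (hdet : γ.det = 1) (h : cubicActsZ γ ![0, 0, m, n] ![0, 0, m', n']) : γ = 1 := by
  obtain ⟨e, f, g, k, rfl⟩ : ∃ e f g k : ℤ, γ = !![e, f; g, k] :=
    ⟨_, _, _, _, Matrix.eta_fin_two γ⟩
  rw [Matrix.det_fin_two_of] at hdet
  -- `γ` sends `y² (m x + n y)` to `(f x + k y)² (A x + B y)`
  set A := m * e + n * f
  set B := m * g + n * k
  have hcoeff : ![0, 0, m', n'] =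
      ![A * f ^ 2, B * f ^ 2 + 2 * A * f * k, 2 * B * f * k + A * k ^ 2, B * k ^ 2] :=
    formEvalZ_injective <| funext₂ fun x y => by
      rw [h]
      simp only [formEvalZ, Matrix.cons_val, Matrix.of_apply]
      ring
  have E0 := congrFun hcoeff 0
  have E1 := congrFun hcoeff 1
  have E2 := congrFun hcoeff 2
  have E3 := congrFun hcoeff 3
  simp only [Matrix.cons_val] at E0 E1 E2 E3
  obtain rfl : f = 0 := by
    by_contra hf0
    have hf2 : f ^ 2 ≠ 0 := pow_ne_zero 2 hf0
    have hA : A = 0 := (mul_eq_zero.mp E0.symm).resolve_right hf2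
    have hB : B = 0 :=
      (mul_eq_zero.mp (by linear_combination -E1 - 2 * f * k * hA)).resolve_right hf2
    have : m = 0 := by linear_combination k * hA - f * hB - m * hdet
    omega
  obtain ⟨rfl, rfl⟩ | ⟨rfl, rfl⟩ :=
    Int.eq_one_or_neg_one_of_mul_eq_one' (by linarith : e * k = 1)
  · have hmm : m' = m := by rw [E2]; ring
    have hg : n' - n = m * g := by rw [E3]; ring
    have hg0 : m * g = 0 :=
      hg ▸ Int.eq_zero_of_abs_lt_dvd ⟨g, hg⟩ (abs_lt.mpr ⟨by omega, by omega⟩)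
    obtain rfl : g = 0 := (mul_eq_zero.mp hg0).resolve_left (by omega)
    exact Matrix.one_fin_two.symm
  · have : m' = -m := by rw [E2]; ring
    omega

theorem CubicEquiv.reduced_eq {m n m' n' : ℤ} (hm : 1 ≤ m) (hn : 0 ≤ n) (hnm : n < m)
    (hn' : 0 ≤ n') (hnm' : n' < m') (h : CubicEquiv ![0, 0, m, n] ![0, 0, m', n']) :
    m' = m ∧ n' = n := by
  obtain ⟨γ, hdet, hγ⟩ := h
  obtain rfl := eq_one_of_cubicActsZ_reduced hm hn hnm hn' hnm' hdet hγ
  rw [cubicActsZ_one_iff] at hγ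
  exact ⟨by simpa using congrFun hγ 2, by simpa using congrFun hγ 3⟩

/-- Decomposition of type II singular integral forms: every nonzero integral binary cubic
form of zero discriminant not `SL₂(ℤ)`-equivalent to any `(0,0,0,k)` is `SL₂(ℤ)`-equivalent
to exactly one `(0,0,m,n)` with `m ≥ 1`, `0 ≤ n < m`; moreover the stabilizer in `SL₂(ℤ)`
of every such form `(0,0,m,n)` is trivial. -/
theorem typeII_orbit_decomposition :
    (∀ v : Fin 4 → ℤ, v ≠ 0 → cubicDiscZ v = 0 →
      (¬ ∃ (γ : Matrix (Fin 2) (Fin 2) ℤ) (k : ℤ),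
        γ.det = 1 ∧ cubicActsZ γ ![0, 0, 0, k] v) →
      ∃! mn : ℤ × ℤ, 1 ≤ mn.1 ∧ 0 ≤ mn.2 ∧ mn.2 < mn.1 ∧
        ∃ γ : Matrix (Fin 2) (Fin 2) ℤ, γ.det = 1 ∧
          cubicActsZ γ ![0, 0, mn.1, mn.2] v) ∧
    (∀ m n : ℤ, 1 ≤ m → 0 ≤ n → n < m →
      ∀ γ : Matrix (Fin 2) (Fin 2) ℤ, γ.det = 1 →
        cubicActsZ γ ![0, 0, m, n] ![0, 0, m, n] → γ = 1) := by
  refine ⟨fun v _ hdisc hnotCube => ?_, fun m n hm hn hnm γ hdet hγ =>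
    eq_one_of_cubicActsZ_reduced hm hn hnm hn hnm hdet hγ⟩
  obtain ⟨p, q, hpq, hroot⟩ := exists_isDoubleRoot_of_cubicDiscZ_eq_zero hdisc
  obtain ⟨p, q, r, s, hdet, hroot⟩ := hroot.exists_primitive hpq
  obtain ⟨C, D, hvCD⟩ := hroot.exists_cubicEquiv_zero_zero hdet
  have hC : C ≠ 0 := by
    rintro rfl
    obtain ⟨γ, hγ, hact⟩ := hvCD.symm
    exact hnotCube ⟨γ, D, hγ, hact⟩
  obtain ⟨m, n, hm, hn, hnm, hmn⟩ := exists_reduced_cubicEquiv hC D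
  have hmnv : CubicEquiv ![0, 0, m, n] v := hmn.trans hvCD.symm
  refine ⟨(m, n), ⟨hm, hn, hnm, hmnv⟩, ?_⟩
  rintro ⟨m', n'⟩ ⟨hm', hn', hnm', hmnv' : CubicEquiv _ v⟩
  obtain ⟨rfl, rfl⟩ := CubicEquiv.reduced_eq hm' hn' hnm' hn hnm (hmnv'.trans hmnv.symm)
  rfl
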